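/- Let N > 0, ℓ > 0, C₀ > 0, let ω : ℝ³ → ℝ be measurable with 0 ≤ ω(x) ≤ C₀/(N|x|) for all x ≠ 0 and ω(x) = 0 for |x| > ℓ, and let φ ∈ L⁴(ℝ³; ℂ). Then the kernel k(x,y) := −N ω(x−y) φ((x+y)/2)² belongs to L²(ℝ³×ℝ³) and ‖k‖_{L²(ℝ³×ℝ³)}² ≤ 4πℓ C₀² ‖φ‖_{L⁴(ℝ³)}⁴. -/

import Mathlib

/-!
The change of variables `(x, y) ↦ (x - y, (x + y) / 2)` is a composition of two shears, so it
preserves Lebesgue measure on `ℝ³ × ℝ³` and turns `k` into the product `(-N ω(u)) · φ(v)²`.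
Hence `‖k‖₂² = ‖N ω‖₂² ‖φ‖₄⁴`, and `N² ω(u)² ≤ C₀² |u|⁻²` on the ball of radius `ℓ`, where
`|u|⁻²` integrates in polar coordinates to `4π ℓ`.
-/

open MeasureTheory Real
open scoped ENNReal

noncomputable section

abbrev E3 : Type := EuclideanSpace ℝ (Fin 3)

open Metric Set

namespace MeasureTheory

variable {α β 𝕜 : Type*} [MeasurableSpace α] [MeasurableSpace β] [RCLike 𝕜]
  {μ : Measure α} {ν : Measure β}

theorem integral_norm_sq_mul_prod [SFinite μ] [SFinite ν] (f : α → 𝕜) (g : β → 𝕜) :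
    ∫ z, ‖f z.1 * g z.2‖ ^ 2 ∂(μ.prod ν) = (∫ x, ‖f x‖ ^ 2 ∂μ) * ∫ y, ‖g y‖ ^ 2 ∂ν := by
  simp_rw [norm_mul, mul_pow]
  exact integral_prod_mul (fun x => ‖f x‖ ^ 2) fun y => ‖g y‖ ^ 2

theorem MemLp.mul_prod_two {f : α → 𝕜} {g : β → 𝕜} (hf : MemLp f 2 μ) (hg : MemLp g 2 ν) :
    MemLp (fun z : α × β => f z.1 * g z.2) 2 (μ.prod ν) := by
  refine (memLp_two_iff_integrable_sq_norm (hf.1.comp_fst.mul hg.1.comp_snd)).2 ?_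
  simp only [Pi.mul_apply, norm_mul, mul_pow]
  exact ((memLp_two_iff_integrable_sq_norm hf.1).1 hf).mul_prod
    ((memLp_two_iff_integrable_sq_norm hg.1).1 hg)

theorem MemLp.sq_of_four {f : α → 𝕜} (hf : MemLp f 4 μ) : MemLp (f ^ 2) 2 μ := by
  refine (memLp_two_iff_integrable_sq_norm (hf.1.pow 2)).2 ?_
  simpa only [Pi.pow_apply, norm_pow, ← pow_mul] using hf.integrable_norm_pow (p := 4) (by norm_num)

end MeasureTheory

section Midpoint

variable (E : Type*) [NormedAddCommGroup E] [NormedSpace ℝ E] [MeasurableSpace E] [BorelSpace E]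
  [SecondCountableTopology E]

def midpointCoords : (E × E) ≃ᵐ (E × E) where
  toFun p := (p.1 - p.2, (2 : ℝ)⁻¹ • (p.1 + p.2))
  invFun q := (q.2 + (2 : ℝ)⁻¹ • q.1, q.2 - (2 : ℝ)⁻¹ • q.1)
  left_inv p := by ext <;> simp only <;> module
  right_inv q := by ext <;> simp only <;> module
  measurable_toFun := by
    change Measurable fun p : E × E => (p.1 - p.2, (2 : ℝ)⁻¹ • (p.1 + p.2))
    fun_prop
  measurable_invFun := by
    change Measurable fun q : E × E => (q.2 + (2 : ℝ)⁻¹ • q.1, q.2 - (2 : ℝ)⁻¹ • q.1)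
    fun_prop

variable {E} (μ : Measure E) [μ.IsAddRightInvariant] [SFinite μ]

theorem measurePreserving_midpointCoords :
    MeasurePreserving (midpointCoords E) (μ.prod μ) (μ.prod μ) := by
  have shear : MeasurePreserving (fun q : E × E => (q.1, q.2 + (2 : ℝ)⁻¹ • q.1))
      (μ.prod μ) (μ.prod μ) :=
    (MeasurePreserving.id μ).skew_product (by fun_prop) <|
      Filter.Eventually.of_forall fun u => map_add_right_eq_self μ ((2 : ℝ)⁻¹ • u)
  convert shear.comp (measurePreserving_sub_prod μ μ) using 1
  ext p <;> simp only [midpointCoords, MeasurableEquiv.coe_mk, Equiv.coe_fn_mk,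
    Function.comp_apply]
  module

variable {μ} {𝕜 : Type*} [RCLike 𝕜]

theorem MeasureTheory.MemLp.mul_comp_midpointCoords {f g : E → 𝕜} (hf : MemLp f 2 μ)
    (hg : MemLp g 2 μ) :
    MemLp (fun p : E × E => f (p.1 - p.2) * g ((2 : ℝ)⁻¹ • (p.1 + p.2))) 2 (μ.prod μ) :=
  (hf.mul_prod_two hg).comp_measurePreserving (measurePreserving_midpointCoords μ)

theorem integral_norm_sq_mul_comp_midpointCoords (f g : E → 𝕜) :
    ∫ p, ‖f (p.1 - p.2) * g ((2 : ℝ)⁻¹ • (p.1 + p.2))‖ ^ 2 ∂(μ.prod μ) =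
      (∫ u, ‖f u‖ ^ 2 ∂μ) * ∫ v, ‖g v‖ ^ 2 ∂μ := by
  rw [← integral_norm_sq_mul_prod]
  exact (measurePreserving_midpointCoords μ).integral_comp (midpointCoords E).measurableEmbedding
    fun q => ‖f q.1 * g q.2‖ ^ 2

end Midpoint

section InverseSquare

variable {E : Type*} [NormedAddCommGroup E]

theorem indicator_closedBall_inv_norm_sq (ℓ : ℝ) :
    (closedBall (0 : E) ℓ).indicator (fun x => (‖x‖ ^ 2)⁻¹) =
      fun x => (Iic ℓ).indicator (fun r : ℝ => (r ^ 2)⁻¹) ‖x‖ := by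
  ext x
  simp only [indicator, mem_closedBall_zero_iff, mem_Iic]

theorem eqOn_sq_smul_indicator_inv_sq (ℓ : ℝ) :
    EqOn (fun y : ℝ => y ^ 2 • (Iic ℓ).indicator (fun r : ℝ => (r ^ 2)⁻¹) y)
      ((Iic ℓ).indicator 1) (Ioi 0) := by
  intro y (hy : 0 < y)
  by_cases hyℓ : y ≤ ℓ <;> simp [hyℓ, hy.ne']

theorem sq_mul_le_indicator_inv_norm_sq {N ℓ C₀ w : ℝ} {x : E} (hN : 0 < N) (hx : x ≠ 0)
    (hw0 : 0 ≤ w) (hwb : w ≤ C₀ / (N * ‖x‖)) (hws : ℓ < ‖x‖ → w = 0) :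
    (N * w) ^ 2 ≤ C₀ ^ 2 * (closedBall 0 ℓ).indicator (fun x => (‖x‖ ^ 2)⁻¹) x := by
  by_cases hxℓ : ‖x‖ ≤ ℓ
  · have hNw : N * w ≤ C₀ / ‖x‖ :=
      calc N * w ≤ N * (C₀ / (N * ‖x‖)) := mul_le_mul_of_nonneg_left hwb hN.le
        _ = C₀ / ‖x‖ := by field_simp [norm_ne_zero_iff.2 hx]
    rw [indicator_of_mem (mem_closedBall_zero_iff.2 hxℓ), ← div_eq_mul_inv, ← div_pow]
    exact pow_le_pow_left₀ (by positivity) hNw 2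
  · rw [hws (not_le.1 hxℓ), indicator_of_notMem (by simpa using hxℓ)]
    simp

variable [InnerProductSpace ℝ E] [FiniteDimensional ℝ E] [MeasurableSpace E] [BorelSpace E]
  (hE : Module.finrank ℝ E = 3)
include hE

theorem integrableOn_inv_norm_sq_closedBall (ℓ : ℝ) :
    IntegrableOn (fun x : E => (‖x‖ ^ 2)⁻¹) (closedBall 0 ℓ) := by
  have : Nontrivial E := Module.nontrivial_of_finrank_eq_succ hE
  rw [← integrable_indicator_iff measurableSet_closedBall,
    indicator_closedBall_inv_norm_sq, integrable_fun_norm_addHaar, hE,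
    integrableOn_congr_fun (eqOn_sq_smul_indicator_inv_sq ℓ) measurableSet_Ioi,
    integrableOn_indicator_iff measurableSet_Iic, inter_comm, Ioi_inter_Iic]
  exact integrableOn_const measure_Ioc_lt_top.ne

theorem integral_inv_norm_sq_closedBall {ℓ : ℝ} (hℓ : 0 ≤ ℓ) :
    ∫ x in closedBall (0 : E) ℓ, (‖x‖ ^ 2)⁻¹ = 4 * π * ℓ := by
  have : Nontrivial E := Module.nontrivial_of_finrank_eq_succ hE
  rw [← integral_indicator measurableSet_closedBall, indicator_closedBall_inv_norm_sq,
    integral_fun_norm_addHaar, hE, setIntegral_congr_fun measurableSet_Ioi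
    (eqOn_sq_smul_indicator_inv_sq ℓ), setIntegral_indicator measurableSet_Iic, Ioi_inter_Iic,
    Pi.one_def, setIntegral_const, Real.volume_real_Ioc_of_le hℓ, measureReal_def,
    InnerProductSpace.volume_ball_of_dim_odd (k := 1) hE, hE, ENNReal.ofReal_one, one_pow,
    one_mul, ENNReal.toReal_ofReal (by positivity)]
  norm_num [Nat.doubleFactorial]
  ring

theorem integrable_sq_and_integral_sq_le_of_le_div_norm {N ℓ C₀ : ℝ} {ω : E → ℝ} (hN : 0 < N)
    (hℓ : 0 ≤ ℓ) (hωm : AEStronglyMeasurable ω) (hω0 : ∀ x, 0 ≤ ω x)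
    (hωb : ∀ x, x ≠ 0 → ω x ≤ C₀ / (N * ‖x‖)) (hωs : ∀ x, ℓ < ‖x‖ → ω x = 0) :
    Integrable (fun x => (N * ω x) ^ 2) ∧ ∫ x, (N * ω x) ^ 2 ≤ 4 * π * ℓ * C₀ ^ 2 := by
  have : Nontrivial E := Module.nontrivial_of_finrank_eq_succ hE
  set bound : E → ℝ := fun x => C₀ ^ 2 * (closedBall 0 ℓ).indicator (fun x => (‖x‖ ^ 2)⁻¹) x
  have hle : ∀ᵐ x, ‖(N * ω x) ^ 2‖ ≤ bound x := by
    filter_upwards [compl_mem_ae_iff.2 (measure_singleton (0 : E))] with x hx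
    rw [Real.norm_of_nonneg (sq_nonneg _)]
    exact sq_mul_le_indicator_inv_norm_sq hN hx (hω0 x) (hωb x hx) (hωs x)
  have hbound : Integrable bound :=
    ((integrableOn_inv_norm_sq_closedBall hE ℓ).integrable_indicator
      measurableSet_closedBall).const_mul _
  refine ⟨hbound.mono' ((hωm.const_mul N).pow 2) hle, ?_⟩
  calc ∫ x, (N * ω x) ^ 2 ≤ ∫ x, bound x :=
        integral_mono_of_nonneg (ae_of_all _ fun x => sq_nonneg _) hbound
          (hle.mono fun x hx => (le_abs_self _).trans hx)
    _ = 4 * π * ℓ * C₀ ^ 2 := by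
        rw [integral_const_mul, integral_indicator measurableSet_closedBall,
          integral_inv_norm_sq_closedBall hE hℓ]
        ring

end InverseSquare

theorem stmt1 (N ℓ C₀ : ℝ) (hN : 0 < N) (hℓ : 0 < ℓ)
    (ω : E3 → ℝ) (hωm : Measurable ω) (hω0 : ∀ x, 0 ≤ ω x)
    (hωb : ∀ x : E3, x ≠ 0 → ω x ≤ C₀ / (N * ‖x‖))
    (hωs : ∀ x : E3, ℓ < ‖x‖ → ω x = 0)
    (φ : E3 → ℂ) (hφ : MemLp φ 4 (volume : Measure E3)) :
    MemLp (fun p : E3 × E3 =>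
        -(N : ℂ) * (ω (p.1 - p.2) : ℂ) * φ ((2 : ℝ)⁻¹ • (p.1 + p.2)) ^ 2) 2
      (volume : Measure (E3 × E3)) ∧
    (∫ p : E3 × E3,
        ‖-(N : ℂ) * (ω (p.1 - p.2) : ℂ) * φ ((2 : ℝ)⁻¹ • (p.1 + p.2)) ^ 2‖ ^ 2)
      ≤ 4 * π * ℓ * C₀ ^ 2 * ∫ z : E3, ‖φ z‖ ^ 4 := by
  set f : E3 → ℂ := fun u => -(N : ℂ) * (ω u : ℂ)
  have hf_norm_sq : (fun u => ‖f u‖ ^ 2) = fun u => (N * ω u) ^ 2 := by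
    ext u
    simp [f, mul_pow]
  obtain ⟨hf_int, hf_le⟩ :=
    integrable_sq_and_integral_sq_le_of_le_div_norm (by simp) hN hℓ.le
      hωm.aestronglyMeasurable hω0 hωb hωs
  have hf : MemLp f 2 volume :=
    (memLp_two_iff_integrable_sq_norm (by fun_prop)).2 (hf_norm_sq ▸ hf_int)
  rw [Measure.volume_eq_prod]
  refine ⟨hf.mul_comp_midpointCoords hφ.sq_of_four, ?_⟩
  refine (integral_norm_sq_mul_comp_midpointCoords f fun v => φ v ^ 2).trans_le ?_
  simp_rw [hf_norm_sq, norm_pow, ← pow_mul]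
  exact mul_le_mul_of_nonneg_right hf_le (integral_nonneg fun z => by positivity)
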